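/- arXiv:1709.06676 — 4 statements merged into one kernel-verified Lean document; each statement's English description precedes it below -/
import Mathlib

section
/- Let $m,p>0$ with $mp>1$, $0<\beta<1$, $b>0$, and suppose $p(m+\beta)=1+p$. Define $C_* = \left[\frac{b(mp-\beta)^{1+p}}{(m(1+p))^{p} p(m+\beta)}\right]^{1/(mp-\beta)}$ and, for a constant $C>0$, let $\zeta_* = b(1-\beta)C^{\beta-1}\left((C/C_*)^{mp-\beta}-1\right)$. Then the travelling wave $u(x,t)=C(\zeta_* t - x)_+^{(1+p)/(mp-\beta)}$ satisfies, at every point where $\zeta_* t - x > 0$, the equation $u_t = \big(|(u^m)_x|^{p-1}(u^m)_x\big)_x - b u^{\beta}$. -/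
open Real

/-- positive part -/
noncomputable def pp (s : ℝ) : ℝ := max s 0

open Filter Topology

/-!
With `s = ζ t - x` and `u = C s^α`, each term of the equation is a multiple of `s^(α-1)`:
`u_t = C α ζ s^(α-1)`, the flux is `-(C^m α m)^p s^((α m - 1) p)`, and `b u^β = b C^β s^(α β)`.
In the borderline case, `α = (1+p)/(mp-β)` satisfies `(α m - 1) p = α` and `α β = α - 1`, so the
equation reduces to the identity `C α ζ = (C^m α m)^p α - b C^β` between coefficients, which is
exactly what the choice of `C_*` and `ζ_*` achieves.
-/

lemma pp_of_nonneg {s : ℝ} (hs : 0 ≤ s) : pp s = s := max_eq_left hs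

lemma pp_eventuallyEq_id {s : ℝ} (hs : 0 < s) : pp =ᶠ[𝓝 s] id := by
  filter_upwards [lt_mem_nhds hs] with r hr using pp_of_nonneg hr.le

lemma mul_pp_rpow_rpow {C : ℝ} (hC : 0 ≤ C) (α m s : ℝ) :
    (C * pp s ^ α) ^ m = C ^ m * pp s ^ (α * m) := by
  have hpp : 0 ≤ pp s := le_max_right s 0
  rw [mul_rpow hC (rpow_nonneg hpp α), ← rpow_mul hpp]

lemma hasDerivAt_const_mul_pp_rpow (A e : ℝ) {s : ℝ} (hs : 0 < s) :
    HasDerivAt (fun r => A * pp r ^ e) (A * (e * s ^ (e - 1))) s :=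
  ((hasDerivAt_rpow_const (Or.inl hs.ne')).const_mul A).congr_of_eventuallyEq <| by
    filter_upwards [pp_eventuallyEq_id hs] with r hr
    simp only [hr, id]

lemma deriv_const_mul_pp_rpow_sub (A e c : ℝ) {y : ℝ} (hy : 0 < c - y) :
    deriv (fun z => A * pp (c - z) ^ e) y = -(A * (e * (c - y) ^ (e - 1))) := by
  have hinner : HasDerivAt (fun z : ℝ => c - z) (-1) y := by
    simpa using (hasDerivAt_id y).const_sub c
  exact ((hasDerivAt_const_mul_pp_rpow A e hy).comp y hinner).deriv.trans (mul_neg_one _)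

lemma deriv_const_mul_pp_rpow_mul_sub (A e ζ x : ℝ) {t : ℝ} (ht : 0 < ζ * t - x) :
    deriv (fun τ => A * pp (ζ * τ - x) ^ e) t = A * (e * (ζ * t - x) ^ (e - 1)) * ζ := by
  have hinner : HasDerivAt (fun τ : ℝ => ζ * τ - x) ζ t := by
    simpa using ((hasDerivAt_id t).const_mul ζ).sub_const x
  exact ((hasDerivAt_const_mul_pp_rpow A e ht).comp t hinner).deriv

lemma abs_neg_rpow_sub_one_mul_neg {v : ℝ} (hv : 0 < v) (p : ℝ) :
    |-v| ^ (p - 1) * -v = -v ^ p := by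
  rw [abs_neg, abs_of_pos hv, rpow_sub_one hv.ne']
  field_simp

section TravellingWave

variable {m p β b C ζ α : ℝ}

lemma wave_flux_eventuallyEq (hC : 0 < C) (hαm : 0 < α * m) (hflux : (α * m - 1) * p = α)
    {x t : ℝ} (hs : 0 < ζ * t - x) :
    (fun y => |deriv (fun z => (C * pp (ζ * t - z) ^ α) ^ m) y| ^ (p - 1) *
        deriv (fun z => (C * pp (ζ * t - z) ^ α) ^ m) y) =ᶠ[𝓝 x]
      fun y => -(C ^ m * (α * m)) ^ p * pp (ζ * t - y) ^ α := by
  have hnear : ∀ᶠ y in 𝓝 x, 0 < ζ * t - y :=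
    (continuous_const.sub continuous_id).continuousAt.eventually (lt_mem_nhds hs)
  filter_upwards [hnear] with y hy
  have hK : 0 < C ^ m * (α * m) := mul_pos (rpow_pos_of_pos hC m) hαm
  have hpow : deriv (fun z => (C * pp (ζ * t - z) ^ α) ^ m) y
      = -(C ^ m * (α * m) * (ζ * t - y) ^ (α * m - 1)) := by
    simp only [mul_pp_rpow_rpow hC.le]
    rw [deriv_const_mul_pp_rpow_sub _ _ _ hy]
    ring
  rw [hpow, abs_neg_rpow_sub_one_mul_neg (mul_pos hK (rpow_pos_of_pos hy _)),
    mul_rpow hK.le (rpow_pos_of_pos hy _).le, ← rpow_mul hy.le, hflux,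
    pp_of_nonneg hy.le]
  ring

theorem pp_rpow_wave_solves (hC : 0 < C) (hαm : 0 < α * m) (hflux : (α * m - 1) * p = α)
    (habs : α * β = α - 1) (hcoef : C * α * ζ = (C ^ m * (α * m)) ^ p * α - b * C ^ β)
    (x t : ℝ) (hs : 0 < ζ * t - x) :
    deriv (fun τ => C * pp (ζ * τ - x) ^ α) t =
      deriv (fun y => |deriv (fun z => (C * pp (ζ * t - z) ^ α) ^ m) y| ^ (p - 1) *
        deriv (fun z => (C * pp (ζ * t - z) ^ α) ^ m) y) x
        - b * (C * pp (ζ * t - x) ^ α) ^ β := by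
  rw [deriv_const_mul_pp_rpow_mul_sub C α ζ x hs, (wave_flux_eventuallyEq hC hαm hflux hs).deriv_eq,
    deriv_const_mul_pp_rpow_sub _ _ _ hs, mul_pp_rpow_rpow hC.le, habs, pp_of_nonneg hs.le]
  linear_combination (ζ * t - x) ^ (α - 1) * hcoef

end TravellingWave

section Borderline

variable {m p β b C : ℝ}

lemma borderline_flux_exponent (hq : 0 < m * p - β) (hcrit : p * (m + β) = 1 + p) :
    ((1 + p) / (m * p - β) * m - 1) * p = (1 + p) / (m * p - β) := by
  rw [div_mul_eq_mul_div, div_sub_one hq.ne', div_mul_eq_mul_div, div_left_inj' hq.ne']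
  linear_combination hcrit

lemma borderline_absorption_exponent (hq : 0 < m * p - β) (hcrit : p * (m + β) = 1 + p) :
    (1 + p) / (m * p - β) * β = (1 + p) / (m * p - β) - 1 := by
  rw [div_sub_one hq.ne', div_mul_eq_mul_div, div_left_inj' hq.ne']
  linear_combination hcrit

lemma borderline_speed_coeff (hm : 0 < m) (hp : 0 < p) (hb : 0 < b) (hC : 0 < C)
    (hq : 0 < m * p - β) (hcrit : p * (m + β) = 1 + p) :
    C * ((1 + p) / (m * p - β)) * (b * (1 - β) * C ^ (β - 1) *
      ((C / (b * (m * p - β) ^ (1 + p) / ((m * (1 + p)) ^ p * p * (m + β))) ^ (1 / (m * p - β)))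
        ^ (m * p - β) - 1))
      = (C ^ m * ((1 + p) / (m * p - β) * m)) ^ p * ((1 + p) / (m * p - β)) - b * C ^ β := by
  set q := m * p - β
  have hmβ : 0 < m + β := pos_of_mul_pos_right (by linarith) hp.le
  have hCstar : ((b * q ^ (1 + p) / ((m * (1 + p)) ^ p * p * (m + β))) ^ (1 / q)) ^ q
      = b * q ^ (1 + p) / ((m * (1 + p)) ^ p * p * (m + β)) := by
    rw [one_div, rpow_inv_rpow (by positivity) hq.ne']
  have hK : (C ^ m * ((1 + p) / q * m)) ^ p = C ^ q * C ^ β * ((m * (1 + p)) ^ p / q ^ p) := by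
    rw [mul_rpow (by positivity) (by positivity), ← rpow_mul hC.le,
      show (1 + p) / q * m = m * (1 + p) / q by ring, div_rpow (by positivity) hq.le,
      show m * p = q + β by ring, rpow_add hC]
  rw [div_rpow hC.le (by positivity), hCstar, hK, rpow_add hq, rpow_one, rpow_sub_one hC.ne']
  have hq_eq : (1 + p) * (1 - β) = q := by linear_combination -hcrit
  field_simp
  rw [hq_eq]
  linear_combination q * C ^ q * ((1 + p) * m) ^ p * hcrit

end Borderline

theorem stmt0_general (m p β b C : ℝ) (hm : 0 < m) (hp : 0 < p) (hmp : 1 < m * p)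
    (hβ1 : β < 1) (hb : 0 < b) (hC : 0 < C)
    (hcrit : p * (m + β) = 1 + p) :
    let Cstar : ℝ := (b * (m * p - β) ^ (1 + p) /
      ((m * (1 + p)) ^ p * p * (m + β))) ^ (1 / (m * p - β))
    let ζ : ℝ := b * (1 - β) * C ^ (β - 1) * ((C / Cstar) ^ (m * p - β) - 1)
    let u : ℝ → ℝ → ℝ := fun x t => C * (pp (ζ * t - x)) ^ ((1 + p) / (m * p - β))
    ∀ x t : ℝ, 0 < ζ * t - x →
      deriv (fun τ => u x τ) t =
        deriv (fun y => |deriv (fun z => (u z t) ^ m) y| ^ (p - 1) *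
          deriv (fun z => (u z t) ^ m) y) x - b * (u x t) ^ β := by
  intro Cstar ζ u
  have hq : 0 < m * p - β := by linarith
  exact pp_rpow_wave_solves hC (by positivity) (borderline_flux_exponent hq hcrit)
    (borderline_absorption_exponent hq hcrit) (borderline_speed_coeff hm hp hb hC hq hcrit)

/-- the travelling wave `u(x,t) = C (ζ* t - x)_+^{(1+p)/(mp-β)}`
solves `u_t = (|(u^m)_x|^{p-1} (u^m)_x)_x - b u^β` where it is positive,
in the borderline case `p(m+β) = 1+p`. -/
theorem stmt0 (m p β b C : ℝ) (hm : 0 < m) (hp : 0 < p) (hmp : 1 < m * p)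
    (hβ0 : 0 < β) (hβ1 : β < 1) (hb : 0 < b) (hC : 0 < C)
    (hcrit : p * (m + β) = 1 + p) :
    let Cstar : ℝ := (b * (m * p - β) ^ (1 + p) /
      ((m * (1 + p)) ^ p * p * (m + β))) ^ (1 / (m * p - β))
    let ζ : ℝ := b * (1 - β) * C ^ (β - 1) * ((C / Cstar) ^ (m * p - β) - 1)
    let u : ℝ → ℝ → ℝ := fun x t => C * (pp (ζ * t - x)) ^ ((1 + p) / (m * p - β))
    ∀ x t : ℝ, 0 < ζ * t - x →
      deriv (fun τ => u x τ) t =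
        deriv (fun y => |deriv (fun z => (u z t) ^ m) y| ^ (p - 1) *
          deriv (fun z => (u z t) ^ m) y) x - b * (u x t) ^ β :=
  stmt0_general m p β b C hm hp hmp hβ1 hb hC hcrit
end

section
/- Let $m,p>0$ with $mp>1$, $b>0$, $C>0$, and $\alpha=(1+p)/(mp-1)$. Define $\bar C=\left[\frac{(mp-1)^{1+p}}{p(m+1)(m(1+p))^{p}}\right]^{1/(mp-1)}$ and $u(x,t)=C(-x)_+^{(1+p)/(mp-1)} e^{-bt}\big[1-(C/\bar C)^{mp-1} b^{-1}(1-e^{-b(mp-1)t})\big]^{1/(1-mp)}$. Then at every point with $x<0$ and $0\le t<T$ (where $T$ is the maximal existence time, $T=+\infty$ if $b\ge (C/\bar C)^{mp-1}$), $u$ satisfies $u_t=\big(|(u^m)_x|^{p-1}(u^m)_x\big)_x - b u$. -/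
/-! The solution separates as `u = C (-x)^α g(t)`. Since `(α m - 1) p - 1 = α`, the operator
`v ↦ (|(v^m)_x|^{p-1} (v^m)_x)_x` maps `A (-x)^α` to `A^{mp} (α m)^p (α m - 1) p (-x)^α`, and `C̄` is
chosen so that `(α m)^p (α m - 1) p = C̄^{1-mp}`. The equation for `u` therefore reduces to the
Bernoulli equation `g' = -b g + (C/C̄)^{mp-1} g^{mp}`, which the substitution `w = g^{1-mp}` makes
linear; the time factor of `u` is its solution with `g 0 = 1`. -/

open Real

noncomputable def bernoulliSolution (b K n t : ℝ) : ℝ :=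
  exp (-b * t) * (1 - K * b⁻¹ * (1 - exp (-b * (n - 1) * t))) ^ (1 / (1 - n))

lemma hasDerivAt_bernoulliSolution {b K n t : ℝ} (hb : b ≠ 0) (hn : n ≠ 1)
    (hG : 0 < 1 - K * b⁻¹ * (1 - exp (-b * (n - 1) * t))) :
    HasDerivAt (bernoulliSolution b K n)
      (-b * bernoulliSolution b K n t + K * bernoulliSolution b K n t ^ n) t := by
  have hG₀ := hG.le
  have h1n : 1 - n ≠ 0 := sub_ne_zero.mpr hn.symm
  have hexp (c : ℝ) : HasDerivAt (fun τ => exp (c * τ)) (exp (c * t) * c) t := by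
    simpa using ((hasDerivAt_id t).const_mul c).exp
  have hG' : HasDerivAt (fun τ => 1 - K * b⁻¹ * (1 - exp (-b * (n - 1) * τ)))
      (-(K * b⁻¹ * -(exp (-b * (n - 1) * t) * (-b * (n - 1))))) t := by
    simpa using ((hexp (-b * (n - 1))).const_sub 1).const_mul (K * b⁻¹) |>.const_sub 1
  have hderiv := (hexp (-b)).mul (hG'.rpow_const (p := 1 / (1 - n)) (Or.inl hG.ne'))
  have hexp_pow : exp (-b * t) ^ n = exp (-b * t) * exp (-b * (n - 1) * t) := by
    rw [← exp_mul, ← exp_add]; congr 1; ring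
  have hq : (n - 1) * (1 / (1 - n)) = -1 := by field_simp; ring
  refine hderiv.congr_deriv ?_
  simp only [bernoulliSolution]
  rw [mul_rpow (exp_pos _).le (rpow_nonneg hG₀ _), hexp_pow, ← rpow_mul hG₀,
    show 1 / (1 - n) * n = 1 / (1 - n) - 1 by field_simp; ring]
  set G := 1 - K * b⁻¹ * (1 - exp (-b * (n - 1) * t))
  linear_combination (-(exp (-b * t) * K * exp (-b * (n - 1) * t) * G ^ (1 / (1 - n) - 1))) *
    ((n - 1) * (1 / (1 - n)) * inv_mul_cancel₀ hb + hq)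

lemma hasDerivAt_const_mul_neg_rpow (c β : ℝ) {y : ℝ} (hy : y < 0) :
    HasDerivAt (fun z => c * (-z) ^ β) (-(c * β) * (-y) ^ (β - 1)) y := by
  refine (((hasDerivAt_neg y).rpow_const (p := β) (Or.inl (neg_ne_zero.mpr hy.ne))).const_mul
    c).congr_deriv ?_
  ring

lemma deriv_rpow_of_eqOn_Iio {v : ℝ → ℝ} {A α m y : ℝ} (hA : 0 ≤ A)
    (hv : ∀ z < 0, v z = A * (-z) ^ α) (hy : y < 0) :
    deriv (fun z => v z ^ m) y = -(A ^ m * (α * m)) * (-y) ^ (α * m - 1) := by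
  have hev : (fun z => v z ^ m) =ᶠ[nhds y] fun z => A ^ m * (-z) ^ (α * m) := by
    filter_upwards [Iio_mem_nhds hy] with z (hz : z < 0)
    have hz' : 0 ≤ -z := by linarith
    rw [hv z hz, mul_rpow hA (rpow_nonneg hz' _), ← rpow_mul hz']
  rw [hev.deriv_eq, (hasDerivAt_const_mul_neg_rpow _ _ hy).deriv]

lemma deriv_flux_of_eqOn_Iio {v : ℝ → ℝ} {A α m p x : ℝ} (hA : 0 < A) (hαm : 0 < α * m)
    (hv : ∀ z < 0, v z = A * (-z) ^ α) (hx : x < 0) :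
    deriv (fun y => |deriv (fun z => v z ^ m) y| ^ (p - 1) * deriv (fun z => v z ^ m) y) x
      = A ^ (m * p) * (α * m) ^ p * ((α * m - 1) * p) * (-x) ^ ((α * m - 1) * p - 1) := by
  set B := A ^ m * (α * m)
  have hB : 0 < B := mul_pos (rpow_pos_of_pos hA m) hαm
  have hev : (fun y => |deriv (fun z => v z ^ m) y| ^ (p - 1) * deriv (fun z => v z ^ m) y)
      =ᶠ[nhds x] fun y => -B ^ p * (-y) ^ ((α * m - 1) * p) := by
    filter_upwards [Iio_mem_nhds hx] with y (hy : y < 0)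
    have hy' : 0 < -y := by linarith
    have hs : 0 < B * (-y) ^ (α * m - 1) := mul_pos hB (rpow_pos_of_pos hy' _)
    rw [deriv_rpow_of_eqOn_Iio hA.le hv hy, neg_mul, abs_neg, abs_of_pos hs,
      mul_neg, ← rpow_add_one hs.ne', sub_add_cancel, mul_rpow hB.le (rpow_nonneg hy'.le _),
      ← rpow_mul hy'.le]
    ring
  rw [hev.deriv_eq, (hasDerivAt_const_mul_neg_rpow _ _ hx).deriv,
    mul_rpow (rpow_nonneg hA.le m) hαm.le, ← rpow_mul hA.le]
  ring

lemma barenblatt_constant_identity {m p : ℝ} (hm : 0 < m) (hp : 0 < p) (hmp : 1 < m * p) :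
    (((m * p - 1) ^ (1 + p) / (p * (m + 1) * (m * (1 + p)) ^ p)) ^ (1 / (m * p - 1)))
        ^ (m * p - 1) * (((1 + p) / (m * p - 1) * m) ^ p * (((1 + p) / (m * p - 1) * m - 1) * p))
      = 1 := by
  have ha : 0 < m * p - 1 := by linarith
  have hX : 0 ≤ (m * p - 1) ^ (1 + p) / (p * (m + 1) * (m * (1 + p)) ^ p) := by positivity
  have hαm : (1 + p) / (m * p - 1) * m = m * (1 + p) / (m * p - 1) := by ring
  have hαm1 : (1 + p) / (m * p - 1) * m - 1 = (m + 1) / (m * p - 1) := by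
    rw [div_mul_eq_mul_div, div_sub_one ha.ne']; ring
  rw [← rpow_mul hX, one_div_mul_cancel ha.ne', rpow_one, hαm1, hαm,
    div_rpow (by positivity) ha.le, rpow_add ha, rpow_one]
  have : 0 < (m * (1 + p)) ^ p := by positivity
  have : 0 < (m * p - 1) ^ p := by positivity
  field_simp

lemma barenblatt_exponent_identity {m p : ℝ} (hmp : 1 < m * p) :
    ((1 + p) / (m * p - 1) * m - 1) * p - 1 = (1 + p) / (m * p - 1) := by
  have ha : m * p - 1 ≠ 0 := by linarith
  rw [div_mul_eq_mul_div, div_sub_one ha, div_mul_eq_mul_div, div_sub_one ha]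
  congr 1; ring

/-- the explicit solution for `β = 1`,
`u(x,t) = C(-x)_+^{(1+p)/(mp-1)} e^{-bt} [1 - (C/C̄)^{mp-1} b⁻¹ (1 - e^{-b(mp-1)t})]^{1/(1-mp)}`,
satisfies `u_t = (|(u^m)_x|^{p-1}(u^m)_x)_x - b u` at every point with `x < 0`,
`0 ≤ t`, on the region where the bracketed factor stays positive
(i.e. `t < T`, the maximal existence time; `T = +∞` when `b ≥ (C/C̄)^{mp-1}`). -/
theorem stmt2 (m p b C : ℝ) (hm : 0 < m) (hp : 0 < p) (hmp : 1 < m * p)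
    (hb : 0 < b) (hC : 0 < C) :
    let Cbar : ℝ := ((m * p - 1) ^ (1 + p) /
      (p * (m + 1) * (m * (1 + p)) ^ p)) ^ (1 / (m * p - 1))
    let u : ℝ → ℝ → ℝ := fun x t =>
      C * (pp (-x)) ^ ((1 + p) / (m * p - 1)) * Real.exp (-b * t) *
        (1 - (C / Cbar) ^ (m * p - 1) * b⁻¹ *
          (1 - Real.exp (-b * (m * p - 1) * t))) ^ (1 / (1 - m * p))
    ∀ x t : ℝ, x < 0 → 0 ≤ t →
      0 < 1 - (C / Cbar) ^ (m * p - 1) * b⁻¹ *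
            (1 - Real.exp (-b * (m * p - 1) * t)) →
      deriv (fun τ => u x τ) t =
        deriv (fun y => |deriv (fun z => (u z t) ^ m) y| ^ (p - 1) *
          deriv (fun z => (u z t) ^ m) y) x - b * u x t := by
  intro Cbar u x t hx _ hG
  set α := (1 + p) / (m * p - 1)
  set K := (C / Cbar) ^ (m * p - 1)
  have hCbar : 0 < Cbar := by positivity
  have hg : 0 < bernoulliSolution b K (m * p) t := mul_pos (exp_pos _) (rpow_pos_of_pos hG _)
  have hαm : 0 < α * m := by positivity
  have hu_time :
      (fun τ => u x τ) = fun τ => C * pp (-x) ^ α * bernoulliSolution b K (m * p) τ :=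
    funext fun _ => mul_assoc _ _ _
  have hu_space (z : ℝ) (hz : z < 0) :
      u z t = C * bernoulliSolution b K (m * p) t * (-z) ^ α := by
    simp only [u, bernoulliSolution, pp, max_eq_left (neg_nonneg.mpr hz.le)]
    ring
  have hK : K * Cbar ^ (m * p - 1) = C ^ (m * p - 1) := by
    simp only [K]
    rw [div_rpow hC.le hCbar.le, div_mul_cancel₀ _ (rpow_pos_of_pos hCbar _).ne']
  rw [hu_time, ((hasDerivAt_bernoulliSolution hb.ne' hmp.ne' hG).const_mul _).deriv,
    deriv_flux_of_eqOn_Iio (mul_pos hC hg) hαm hu_space hx, barenblatt_exponent_identity hmp,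
    hu_space x hx,
    mul_rpow hC.le hg.le, show C ^ (m * p) = C * C ^ (m * p - 1) by
      rw [← rpow_one_add' hC.le (by linarith)]; ring_nf,
    pp, max_eq_left (neg_nonneg.mpr hx.le)]
  have hCbar_id : Cbar ^ (m * p - 1) * ((α * m) ^ p * ((α * m - 1) * p)) = 1 :=
    barenblatt_constant_identity hm hp hmp
  linear_combination (C * (-x) ^ α * bernoulliSolution b K (m * p) t ^ (m * p)) *
    ((α * m) ^ p * ((α * m - 1) * p) * hK - K * hCbar_id)
end

section
/- Let $m,p>0$ with $mp>1$, $0<\beta<1$, $b>0$, and suppose $p(m+\beta)>1+p$. Consider the phase-plane ODE $\frac{dY}{dX}=k + bmX^{m+\beta-1}Y^{-1/p}$ with $Y(0)=0$ and $k>0$. If $Y$ is the (increasing, global) solution, then $Y(X)\sim \left[\frac{bm(1+p)}{p(m+\beta)}\right]^{p/(1+p)} X^{p(m+\beta)/(1+p)}$ as $X\to+\infty$, i.e. $\lim_{X\to+\infty} X^{-p(m+\beta)/(1+p)} Y(X) = \left[\frac{bm(1+p)}{p(m+\beta)}\right]^{p/(1+p)}$. -/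
/-!
Put `α = p(m+β)/(1+p)`, so that `X^{m+β-1} (c X^α)^{-1/p} = c^{-1/p} X^{α-1}`. Along the curve
`c X^α` the right-hand side of the equation is therefore `k + bm c^{-1/p} X^{α-1}`, while the
curve itself grows at rate `c α X^{α-1}`; the two balance exactly at the constant `C` with
`C^{1+1/p} α = bm`, which is the limit. For `c > C` a curve `c X^α + A` is an upper barrier as soon
as `X^{α-1}` dominates `k`, and for `0 < c < C` the curve `c X^α - c` is a lower barrier from
`X = 1` on.
-/

open Real Filter Set Topology

namespace PhasePlane

variable {a q γ k α c C A : ℝ} {Y : ℝ → ℝ}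

lemma rpow_mul_mul_rpow_neg {x : ℝ} (hx : 0 < x) (hc : 0 ≤ c) (hγ : γ + 1 = α * (1 + q)) :
    x ^ γ * (c * x ^ α) ^ (-q) = c ^ (-q) * x ^ (α - 1) := by
  rw [mul_rpow hc (rpow_nonneg hx.le α), ← rpow_mul hx.le, mul_left_comm, ← rpow_add hx]
  congr 2
  linarith

lemma mul_eq_rpow_one_add_mul_mul_rpow_neg (hc : 0 < c) :
    c * α = c ^ (1 + q) * α * c ^ (-q) := by
  rw [mul_right_comm, ← rpow_add hc, add_neg_cancel_right, rpow_one]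

lemma mul_lt_mul_rpow_neg_of_lt (hq : 0 < q) (hα : 0 < α) (hCa : C ^ (1 + q) * α = a)
    (hc : 0 < c) (hcC : c < C) : c * α < a * c ^ (-q) := by
  rw [mul_eq_rpow_one_add_mul_mul_rpow_neg hc, ← hCa]
  gcongr

lemma mul_rpow_neg_lt_mul_of_lt (hq : 0 < q) (hα : 0 < α) (hCa : C ^ (1 + q) * α = a)
    (hC : 0 < C) (hCc : C < c) : a * c ^ (-q) < c * α := by
  have hc : 0 < c := hC.trans hCc
  rw [mul_eq_rpow_one_add_mul_mul_rpow_neg hc, ← hCa]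
  gcongr

lemma tendsto_rpow_neg_mul_mul_rpow_add (hα : 0 < α) :
    Tendsto (fun X : ℝ => X ^ (-α) * (c * X ^ α + A)) atTop (𝓝 c) := by
  have hlim : Tendsto (fun X : ℝ => c + A * X ^ (-α)) atTop (𝓝 c) := by
    simpa using ((tendsto_rpow_neg_atTop hα).const_mul A).const_add c
  refine hlim.congr' ((eventually_gt_atTop 0).mono fun X hX => ?_)
  have hXα : X ^ α ≠ 0 := (rpow_pos_of_pos hX α).ne'
  simp only [rpow_neg hX.le]
  field_simp

lemma exists_eventually_le_mul_rpow_add (hq : 0 < q) (hα : 1 < α) (hγ : γ + 1 = α * (1 + q))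
    (hC : 0 < C) (hCa : C ^ (1 + q) * α = a) (hCc : C < c)
    (hY : ∀ x, 0 < x → HasDerivAt Y (k + a * x ^ γ * Y x ^ (-q)) x) :
    ∃ A, ∀ᶠ X in atTop, Y X ≤ c * X ^ α + A := by
  have hc : 0 < c := hC.trans hCc
  have ha : 0 < a := hCa ▸ by positivity
  have hgap := mul_rpow_neg_lt_mul_of_lt hq (by linarith) hCa hC hCc
  obtain ⟨x₀, hx₀⟩ := eventually_atTop.1
    ((((tendsto_rpow_atTop (sub_pos.2 hα)).const_mul_atTop (sub_pos.2 hgap)).eventually_gt_atTop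
      k).and (eventually_gt_atTop 0))
  set A := max 0 (Y x₀ - c * x₀ ^ α)
  refine ⟨A, eventually_atTop.2 ⟨x₀, fun X hX => ?_⟩⟩
  refine image_le_of_deriv_right_lt_deriv_boundary (B := fun x => c * x ^ α + A)
    (fun x hx => (hY x ((hx₀ x₀ le_rfl).2.trans_le hx.1)).continuousAt.continuousWithinAt)
    (fun x hx => (hY x (hx₀ x hx.1).2).hasDerivWithinAt)
    (by linarith [le_max_right 0 (Y x₀ - c * x₀ ^ α)])
    (fun x => ((hasDerivAt_rpow_const (Or.inr hα.le)).const_mul c).add_const A)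
    (fun x hx hYx => ?_) ⟨hX, le_rfl⟩
  obtain ⟨hkx, hx⟩ := hx₀ x hx.1
  have hYle : Y x ^ (-q) ≤ (c * x ^ α) ^ (-q) :=
    rpow_le_rpow_of_nonpos (by positivity) (by linarith [le_max_left 0 (Y x₀ - c * x₀ ^ α)])
      (by linarith)
  calc k + a * x ^ γ * Y x ^ (-q) ≤ k + a * (x ^ γ * (c * x ^ α) ^ (-q)) := by
        rw [mul_assoc]; gcongr
    _ = k + a * c ^ (-q) * x ^ (α - 1) := by rw [rpow_mul_mul_rpow_neg hx hc.le hγ]; ring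
    _ < c * (α * x ^ (α - 1)) := by linarith

lemma exists_eventually_mul_rpow_add_le (hq : 0 < q) (hα : 1 < α) (hγ : γ + 1 = α * (1 + q))
    (hk : 0 ≤ k) (hCa : C ^ (1 + q) * α = a) (hc : 0 < c) (hcC : c < C)
    (hYpos : ∀ x, 0 < x → 0 < Y x)
    (hY : ∀ x, 0 < x → HasDerivAt Y (k + a * x ^ γ * Y x ^ (-q)) x) :
    ∃ A, ∀ᶠ X in atTop, c * X ^ α + A ≤ Y X := by
  have hC : 0 < C := hc.trans hcC
  have ha : 0 < a := hCa ▸ by positivity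
  have hgap := mul_lt_mul_rpow_neg_of_lt hq (by linarith) hCa hc hcC
  have hB (x : ℝ) : HasDerivAt (fun x => c * x ^ α + -c) (c * (α * x ^ (α - 1))) x :=
    ((hasDerivAt_rpow_const (Or.inr hα.le)).const_mul c).add_const (-c)
  refine ⟨-c, eventually_atTop.2 ⟨1, fun X hX => ?_⟩⟩
  refine image_le_of_deriv_right_lt_deriv_boundary' (f := fun x => c * x ^ α + -c)
    (fun x _ => (hB x).continuousAt.continuousWithinAt) (fun x _ => (hB x).hasDerivWithinAt)
    (by simpa using (hYpos 1 one_pos).le)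
    (fun x hx => (hY x (one_pos.trans_le hx.1)).continuousAt.continuousWithinAt)
    (fun x hx => (hY x (one_pos.trans_le hx.1)).hasDerivWithinAt)
    (fun x hx hYx => ?_) ⟨hX, le_rfl⟩
  have hx : 0 < x := one_pos.trans_le hx.1
  have hYge : (c * x ^ α) ^ (-q) ≤ Y x ^ (-q) :=
    rpow_le_rpow_of_nonpos (hYpos x hx) (by linarith) (by linarith)
  calc c * (α * x ^ (α - 1)) < a * c ^ (-q) * x ^ (α - 1) := by
        rw [← mul_assoc]; gcongr
    _ = a * (x ^ γ * (c * x ^ α) ^ (-q)) := by rw [rpow_mul_mul_rpow_neg hx hc.le hγ]; ring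
    _ ≤ a * x ^ γ * Y x ^ (-q) := by rw [mul_assoc]; gcongr
    _ ≤ k + a * x ^ γ * Y x ^ (-q) := le_add_of_nonneg_left hk

theorem tendsto_rpow_neg_mul (hq : 0 < q) (hα : 1 < α) (hγ : γ + 1 = α * (1 + q)) (hk : 0 ≤ k)
    (hC : 0 < C) (hCa : C ^ (1 + q) * α = a) (hYpos : ∀ x, 0 < x → 0 < Y x)
    (hY : ∀ x, 0 < x → HasDerivAt Y (k + a * x ^ γ * Y x ^ (-q)) x) :
    Tendsto (fun X => X ^ (-α) * Y X) atTop (𝓝 C) := by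
  have hα0 : 0 < α := by linarith
  refine tendsto_order.2 ⟨fun l hl => ?_, fun u hu => ?_⟩
  · obtain ⟨c, hlc, hcC⟩ := exists_between (max_lt hl hC)
    obtain ⟨A, hA⟩ := exists_eventually_mul_rpow_add_le hq hα hγ hk hCa
      ((le_max_right l 0).trans_lt hlc) hcC hYpos hY
    filter_upwards [(tendsto_rpow_neg_mul_mul_rpow_add (A := A) hα0).eventually
      (lt_mem_nhds ((le_max_left l 0).trans_lt hlc)), hA, eventually_gt_atTop 0] with X hl hAX hX
    exact hl.trans_le (mul_le_mul_of_nonneg_left hAX (rpow_nonneg hX.le _))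
  · obtain ⟨c, hCc, hcu⟩ := exists_between hu
    obtain ⟨A, hA⟩ := exists_eventually_le_mul_rpow_add hq hα hγ hC hCa hCc hY
    filter_upwards [(tendsto_rpow_neg_mul_mul_rpow_add (A := A) hα0).eventually
      (gt_mem_nhds hcu), hA, eventually_gt_atTop 0] with X hu hAX hX
    exact (mul_le_mul_of_nonneg_left hAX (rpow_nonneg hX.le _)).trans_lt hu

end PhasePlane

theorem stmt6_general (m p β b k : ℝ) (hm : 0 < m) (hp : 0 < p)
    (hb : 0 < b) (hk : 0 < k)
    (hcond : 1 + p < p * (m + β))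
    (Y : ℝ → ℝ) (hYpos : ∀ X : ℝ, 0 < X → 0 < Y X)
    (hODE : ∀ X : ℝ, 0 < X →
      HasDerivAt Y (k + b * m * X ^ (m + β - 1) * (Y X) ^ (-(1 / p))) X) :
    Tendsto (fun X : ℝ => X ^ (-(p * (m + β) / (1 + p))) * Y X) atTop
      (nhds ((b * m * (1 + p) / (p * (m + β))) ^ (p / (1 + p)))) := by
  have hp1 : 0 < 1 + p := by linarith
  have hmβ : 0 < m + β := by nlinarith
  have hα : 1 < p * (m + β) / (1 + p) := by rw [lt_div_iff₀ hp1]; linarith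
  have hγ : m + β - 1 + 1 = p * (m + β) / (1 + p) * (1 + 1 / p) := by field_simp; ring
  have hCa : ((b * m * (1 + p) / (p * (m + β))) ^ (p / (1 + p))) ^ (1 + 1 / p)
      * (p * (m + β) / (1 + p)) = b * m := by
    rw [← rpow_mul (by positivity), show p / (1 + p) * (1 + 1 / p) = 1 by field_simp; ring,
      rpow_one]
    field_simp
  exact PhasePlane.tendsto_rpow_neg_mul (by positivity) hα hγ hk.le (by positivity) hCa hYpos hODE

/-- asymptotics of the phase-plane solution of
`dY/dX = k + b m X^{m+β-1} Y^{-1/p}`, `Y(0)=0`: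
`Y(X) ~ [bm(1+p)/(p(m+β))]^{p/(1+p)} X^{p(m+β)/(1+p)}` as `X → +∞`. -/
theorem stmt6 (m p β b k : ℝ) (hm : 0 < m) (hp : 0 < p) (hmp : 1 < m * p)
    (hβ0 : 0 < β) (hβ1 : β < 1) (hb : 0 < b) (hk : 0 < k)
    (hcond : 1 + p < p * (m + β))
    (Y : ℝ → ℝ) (hY0 : Y 0 = 0) (hYpos : ∀ X : ℝ, 0 < X → 0 < Y X)
    (hmono : StrictMonoOn Y (Set.Ici (0 : ℝ)))
    (hODE : ∀ X : ℝ, 0 < X →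
      HasDerivAt Y (k + b * m * X ^ (m + β - 1) * (Y X) ^ (-(1 / p))) X) :
    Tendsto (fun X : ℝ => X ^ (-(p * (m + β) / (1 + p))) * Y X) atTop
      (nhds ((b * m * (1 + p) / (p * (m + β))) ^ (p / (1 + p)))) :=
  stmt6_general m p β b k hm hp hb hk hcond Y hYpos hODE
end

section
/- Let $m,p>0$, $mp>1$, $0<\beta<1$, $b>0$, $p(m+\beta)>1+p$, and $0<C<C_*$. For $\gamma\in[0,1)$ define $g(x,t)=\big[C^{1-\beta}(-x)_+^{(1+p)(1-\beta)/(mp-\beta)} - b(1-\beta)(1-\gamma)t\big]_+^{1/(1-\beta)}$. Then at the initial time, the residual $S$ defined by $Lg = b g^{\beta} S$ (where $Lg = g_t - (|(g^m)_x|^{p-1}(g^m)_x)_x + bg^{\beta}$) satisfies $S|_{t=0} = \gamma - (C/C_*)^{mp-\beta}$ for $x<0$. In particular, with $\gamma=(C/C_*)^{mp-\beta}$, $g(\cdot,0)$ satisfies $Lg|_{t=0}=0$ for $x<0$, i.e. $\big(|((u_0)^m)'|^{p-1}((u_0)^m)'\big)' = b\,(C/C_*)^{mp-\beta}\, u_0^{\beta}$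 for $u_0(x) = C(-x)_+^{(1+p)/(mp-\beta)}$ and $x<0$. -/
/-!
For `x < 0` every quantity is an explicit power of `-x`: with `e = (1+p)/(mp-β)` one has
`(u₀^m)' = -K (-x)^(me-1)` with `K = C^m m e`, so the flux is `-K^p (-x)^((me-1)p)` and its
derivative is `K^p (me-1) p (-x)^((me-1)p-1)`. The exponent `(me-1)p-1` equals `eβ`, and
`C_*` is precisely the constant for which `K^p (me-1) p = b (C/C_*)^(mp-β) C^β`. At `t = 0`,
`g` is `u₀`, and since `g(x,·) = (A - ct)^(1/(1-β))` near `t = 0`, `∂ₜ g = -b(1-γ) g^β` there.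
-/

open Real Filter Topology

lemma pp_eq_self {s : ℝ} (h : 0 ≤ s) : pp s = s := max_eq_left h

lemma pp_nonneg (s : ℝ) : 0 ≤ pp s := le_max_right _ _

lemma pp_comp_eventuallyEq {f : ℝ → ℝ} {x : ℝ} (hf : ContinuousAt f x) (hx : 0 < f x) :
    (fun y => pp (f y)) =ᶠ[𝓝 x] f :=
  (hf.eventually_const_lt hx).mono fun _ hy => pp_eq_self hy.le

noncomputable def powerProfile (C e x : ℝ) : ℝ := C * pp (-x) ^ e

noncomputable def pFlux (m p : ℝ) (u : ℝ → ℝ) (y : ℝ) : ℝ :=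
  |deriv (fun z => u z ^ m) y| ^ (p - 1) * deriv (fun z => u z ^ m) y

lemma hasDerivAt_const_mul_neg_rpow_s15 (A q : ℝ) {x : ℝ} (hx : x < 0) :
    HasDerivAt (fun y => A * (-y) ^ q) (-(A * q) * (-x) ^ (q - 1)) x := by
  have h := ((Real.hasDerivAt_rpow_const (p := q) (Or.inl (neg_pos.mpr hx).ne')).comp x
    (hasDerivAt_neg x)).const_mul A
  rwa [show -(A * q) * (-x) ^ (q - 1) = A * (q * (-x) ^ (q - 1) * -1) by ring]

lemma powerProfile_rpow_eventuallyEq {C : ℝ} (hC : 0 ≤ C) (e m : ℝ) {x : ℝ} (hx : x < 0) :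
    (fun z => powerProfile C e z ^ m) =ᶠ[𝓝 x] fun z => C ^ m * (-z) ^ (m * e) := by
  filter_upwards [pp_comp_eventuallyEq (f := fun z => -z) continuousAt_neg (neg_pos.mpr hx)]
    with z hz
  have hz0 : 0 ≤ -z := hz ▸ pp_nonneg _
  rw [powerProfile, hz, mul_rpow hC (rpow_nonneg hz0 _), ← rpow_mul hz0, mul_comm e]

lemma deriv_powerProfile_rpow {C : ℝ} (hC : 0 ≤ C) (e m : ℝ) {x : ℝ} (hx : x < 0) :
    deriv (fun z => powerProfile C e z ^ m) x = -(C ^ m * (m * e)) * (-x) ^ (m * e - 1) := by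
  rw [(powerProfile_rpow_eventuallyEq hC e m hx).deriv_eq,
    (hasDerivAt_const_mul_neg_rpow_s15 _ _ hx).deriv]

lemma abs_rpow_sub_one_mul_of_neg {y : ℝ} (hy : y < 0) (p : ℝ) :
    |y| ^ (p - 1) * y = -(-y) ^ p := by
  rw [abs_of_neg hy, rpow_sub_one (neg_pos.mpr hy).ne']
  field_simp [hy.ne]

lemma pFlux_powerProfile {C e : ℝ} (hC : 0 < C) (m p : ℝ) (hme : 0 < m * e) {y : ℝ}
    (hy : y < 0) :
    pFlux m p (powerProfile C e) y = -(C ^ m * (m * e)) ^ p * (-y) ^ ((m * e - 1) * p) := by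
  have hK : 0 < C ^ m * (m * e) := mul_pos (rpow_pos_of_pos hC m) hme
  have hy0 : 0 < -y := neg_pos.mpr hy
  rw [pFlux, deriv_powerProfile_rpow hC.le e m hy,
    abs_rpow_sub_one_mul_of_neg
      (mul_neg_of_neg_of_pos (neg_neg_of_pos hK) (rpow_pos_of_pos hy0 _)), neg_mul, neg_neg,
    mul_rpow hK.le (rpow_nonneg hy0.le _), ← rpow_mul hy0.le, neg_mul]

lemma deriv_pFlux_powerProfile {C e : ℝ} (hC : 0 < C) (m p : ℝ) (hme : 0 < m * e) {x : ℝ}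
    (hx : x < 0) :
    deriv (pFlux m p (powerProfile C e)) x =
      (C ^ m * (m * e)) ^ p * ((m * e - 1) * p) * (-x) ^ ((m * e - 1) * p - 1) := by
  have heq : pFlux m p (powerProfile C e) =ᶠ[𝓝 x]
      fun y => -(C ^ m * (m * e)) ^ p * (-y) ^ ((m * e - 1) * p) :=
    Filter.mem_of_superset (Iio_mem_nhds hx) fun _ hy => pFlux_powerProfile hC m p hme hy
  rw [heq.deriv_eq, (hasDerivAt_const_mul_neg_rpow_s15 _ _ hx).deriv]
  ring

noncomputable def criticalConstant (m p β b : ℝ) : ℝ :=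
  (b * (m * p - β) ^ (1 + p) / ((m * (1 + p)) ^ p * p * (m + β))) ^ (1 / (m * p - β))

lemma criticalConstant_rpow {m p β b : ℝ} (hm : 0 < m) (hp : 0 < p) (hs : 0 < m * p - β)
    (hmβ : 0 < m + β) (hb : 0 < b) :
    criticalConstant m p β b ^ (m * p - β) =
      b * (m * p - β) ^ (1 + p) / ((m * (1 + p)) ^ p * p * (m + β)) := by
  rw [criticalConstant, ← rpow_mul (by positivity), one_div_mul_cancel hs.ne', rpow_one]

lemma mul_criticalExponent_sub_one {m p β : ℝ} (hs : 0 < m * p - β) :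
    m * ((1 + p) / (m * p - β)) - 1 = (m + β) / (m * p - β) := by
  field_simp
  ring

lemma mul_criticalExponent_sub_one_mul_sub_one {m p β : ℝ} (hs : 0 < m * p - β) :
    (m * ((1 + p) / (m * p - β)) - 1) * p - 1 = (1 + p) / (m * p - β) * β := by
  field_simp
  ring

lemma criticalProfile_flux_coeff {m p β b C : ℝ} (hm : 0 < m) (hp : 0 < p)
    (hs : 0 < m * p - β) (hmβ : 0 < m + β) (hb : 0 < b) (hC : 0 < C) :
    (C ^ m * (m * ((1 + p) / (m * p - β)))) ^ p * ((m * ((1 + p) / (m * p - β)) - 1) * p) =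
      b * (C / criticalConstant m p β b) ^ (m * p - β) * C ^ β := by
  have hCs : 0 < criticalConstant m p β b := rpow_pos_of_pos (by positivity) _
  have hCC : C ^ (m * p - β) * C ^ β = C ^ (m * p) := by
    rw [← rpow_add hC, sub_add_cancel]
  rw [div_rpow hC.le hCs.le, criticalConstant_rpow hm hp hs hmβ hb,
    mul_criticalExponent_sub_one hs, show m * ((1 + p) / (m * p - β)) =
      m * (1 + p) / (m * p - β) by ring, mul_rpow (by positivity) (by positivity),
    ← rpow_mul hC.le, div_rpow (by positivity) hs.le, rpow_add hs, rpow_one]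
  field_simp
  linear_combination -hCC

lemma deriv_pFlux_criticalProfile {m p β b C : ℝ} (hm : 0 < m) (hp : 0 < p)
    (hs : 0 < m * p - β) (hmβ : 0 < m + β) (hb : 0 < b) (hC : 0 < C) {x : ℝ} (hx : x < 0) :
    deriv (pFlux m p (powerProfile C ((1 + p) / (m * p - β)))) x =
      b * (C / criticalConstant m p β b) ^ (m * p - β) *
        powerProfile C ((1 + p) / (m * p - β)) x ^ β := by
  have hx0 : 0 < -x := neg_pos.mpr hx
  rw [deriv_pFlux_powerProfile hC m p (by positivity) hx,
    criticalProfile_flux_coeff hm hp hs hmβ hb hC, mul_criticalExponent_sub_one_mul_sub_one hs,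
    powerProfile, pp_eq_self hx0.le, mul_rpow hC.le (rpow_nonneg hx0.le _), ← rpow_mul hx0.le]
  ring

lemma deriv_pp_sub_mul_rpow {A : ℝ} (hA : 0 < A) (c : ℝ) {β : ℝ} (hβ : β ≠ 1) :
    deriv (fun t => pp (A - c * t) ^ (1 / (1 - β))) 0 =
      -(c / (1 - β)) * (A ^ (1 / (1 - β))) ^ β := by
  have hβ' : 1 - β ≠ 0 := sub_ne_zero.mpr hβ.symm
  have heq : (fun t => pp (A - c * t) ^ (1 / (1 - β))) =ᶠ[𝓝 0]
      fun t => (A - c * t) ^ (1 / (1 - β)) :=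
    (pp_comp_eventuallyEq (f := fun t => A - c * t) (by fun_prop) (by simpa using hA)).mono
      fun _ ht => by simp only [ht]
  have hderiv : HasDerivAt (fun t => A - c * t) (-c) 0 := by
    simpa using ((hasDerivAt_id (0 : ℝ)).const_mul c).const_sub A
  rw [heq.deriv_eq, (hderiv.rpow_const (by simp [hA.ne'])).deriv, mul_zero, sub_zero,
    ← rpow_mul hA.le, show 1 / (1 - β) * β = 1 / (1 - β) - 1 by field_simp; ring]
  ring

lemma rpow_one_div_of_mul_rpow {C w : ℝ} (hC : 0 ≤ C) (hw : 0 ≤ w) {k : ℝ} (hk : k ≠ 0)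
    (q : ℝ) :
    (C ^ k * w ^ q) ^ (1 / k) = C * w ^ (q / k) := by
  rw [mul_rpow (rpow_nonneg hC _) (rpow_nonneg hw _), one_div, rpow_rpow_inv hC hk,
    ← rpow_mul hw, div_eq_mul_inv]

theorem stmt15_general (m p β b C γ : ℝ) (hm : 0 < m) (hp : 0 < p) (hmp : 1 < m * p)
    (hβ0 : 0 < β) (hβ1 : β < 1) (hb : 0 < b)
    (hC0 : 0 < C) :
    let Cstar : ℝ := (b * (m * p - β) ^ (1 + p) /
      ((m * (1 + p)) ^ p * p * (m + β))) ^ (1 / (m * p - β))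
    let g : ℝ → ℝ → ℝ := fun x t =>
      (pp (C ^ (1 - β) * (pp (-x)) ^ ((1 + p) * (1 - β) / (m * p - β)) -
        b * (1 - β) * (1 - γ) * t)) ^ (1 / (1 - β))
    let u0 : ℝ → ℝ := fun x => C * (pp (-x)) ^ ((1 + p) / (m * p - β))
    (∀ x : ℝ, x < 0 →
      deriv (fun τ => g x τ) 0 -
        deriv (fun y => |deriv (fun z => (g z 0) ^ m) y| ^ (p - 1) *
          deriv (fun z => (g z 0) ^ m) y) x + b * (g x 0) ^ β =
      b * (g x 0) ^ β * (γ - (C / Cstar) ^ (m * p - β))) ∧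
    (∀ x : ℝ, x < 0 →
      deriv (fun y => |deriv (fun z => (u0 z) ^ m) y| ^ (p - 1) *
        deriv (fun z => (u0 z) ^ m) y) x =
      b * (C / Cstar) ^ (m * p - β) * (u0 x) ^ β) := by
  intro Cstar g u0
  have hs : 0 < m * p - β := by linarith
  have hβ' : 1 - β ≠ 0 := by linarith
  have hflux : ∀ x < 0, deriv (pFlux m p u0) x = b * (C / Cstar) ^ (m * p - β) * u0 x ^ β :=
    fun x hx => deriv_pFlux_criticalProfile hm hp hs (by linarith) hb hC0 hx
  have hdatum : ∀ z,
      (C ^ (1 - β) * pp (-z) ^ ((1 + p) * (1 - β) / (m * p - β))) ^ (1 / (1 - β)) = u0 z :=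
    fun z => by
      rw [rpow_one_div_of_mul_rpow hC0.le (pp_nonneg _) hβ']
      congr 2
      field_simp
  have hg0 : (fun z => g z 0) = u0 := funext fun z => by
    show pp (_ - _ * 0) ^ _ = _
    rw [mul_zero, sub_zero, pp_eq_self (mul_nonneg (rpow_nonneg hC0.le _)
      (rpow_nonneg (pp_nonneg _) _)), hdatum]
  refine ⟨fun x hx => ?_, hflux⟩
  have hApos : 0 < C ^ (1 - β) * pp (-x) ^ ((1 + p) * (1 - β) / (m * p - β)) := by
    rw [pp_eq_self (by linarith)]
    have : 0 < -x := by linarith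
    positivity
  have ht : deriv (fun τ => g x τ) 0 = -(b * (1 - β) * (1 - γ) / (1 - β)) * u0 x ^ β := by
    rw [← hdatum x]
    exact deriv_pp_sub_mul_rpow hApos _ hβ1.ne
  change _ - deriv (pFlux m p fun z => g z 0) x + _ = _
  rw [ht, hg0, hflux x hx, congrFun hg0 x]
  field_simp
  ring

/-- for `g(x,t) = [C^{1-β}(-x)_+^{(1+p)(1-β)/(mp-β)} - b(1-β)(1-γ)t]_+^{1/(1-β)}`
with `γ ∈ [0,1)`, the residual `S` defined by `Lg = b g^β S` satisfies
`S|_{t=0} = γ - (C/C*)^{mp-β}` for `x < 0`; in particular the power profile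
`u₀(x) = C(-x)_+^{(1+p)/(mp-β)}` satisfies
`(|(u₀^m)'|^{p-1}(u₀^m)')' = b (C/C*)^{mp-β} u₀^β` for `x < 0`. -/
theorem stmt15 (m p β b C γ : ℝ) (hm : 0 < m) (hp : 0 < p) (hmp : 1 < m * p)
    (hβ0 : 0 < β) (hβ1 : β < 1) (hb : 0 < b)
    (hcond : 1 + p < p * (m + β)) (hC0 : 0 < C)
    (hγ0 : 0 ≤ γ) (hγ1 : γ < 1)
    (hCs : C < (b * (m * p - β) ^ (1 + p) /
      ((m * (1 + p)) ^ p * p * (m + β))) ^ (1 / (m * p - β))) :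
    let Cstar : ℝ := (b * (m * p - β) ^ (1 + p) /
      ((m * (1 + p)) ^ p * p * (m + β))) ^ (1 / (m * p - β))
    let g : ℝ → ℝ → ℝ := fun x t =>
      (pp (C ^ (1 - β) * (pp (-x)) ^ ((1 + p) * (1 - β) / (m * p - β)) -
        b * (1 - β) * (1 - γ) * t)) ^ (1 / (1 - β))
    let u0 : ℝ → ℝ := fun x => C * (pp (-x)) ^ ((1 + p) / (m * p - β))
    (∀ x : ℝ, x < 0 →
      deriv (fun τ => g x τ) 0 -
        deriv (fun y => |deriv (fun z => (g z 0) ^ m) y| ^ (p - 1) *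
          deriv (fun z => (g z 0) ^ m) y) x + b * (g x 0) ^ β =
      b * (g x 0) ^ β * (γ - (C / Cstar) ^ (m * p - β))) ∧
    (∀ x : ℝ, x < 0 →
      deriv (fun y => |deriv (fun z => (u0 z) ^ m) y| ^ (p - 1) *
        deriv (fun z => (u0 z) ^ m) y) x =
      b * (C / Cstar) ^ (m * p - β) * (u0 x) ^ β) :=
  stmt15_general m p β b C γ hm hp hmp hβ0 hβ1 hb hC0
end
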